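/- Let n ≥ 1 and let H_1, H_2 be naive EGK data of length n with Υ_n(H_1) = Υ_n(H_2). Then 𝓕(H_1;Y,X) = 𝓕(H_2;Y,X) in ℚ(x,y). (Consequently, for an EGK datum G of length n the Laurent polynomial 𝓕̃(G;Y,X) := 𝓕(H;Y,X) for any H with Υ_n(H) = G is well defined.) -/

import Mathlib

noncomputable section

/-- The ambient field `ℚ(x,y)`. -/
abbrev KK : Type := FractionRing (MvPolynomial (Fin 2) ℚ)

/-- `x = X^{1/2}`. -/
def xx : KK := algebraMap (MvPolynomial (Fin 2) ℚ) KK (MvPolynomial.X 0)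

/-- `y = Y^{1/2}`. -/
def yy : KK := algebraMap (MvPolynomial (Fin 2) ℚ) KK (MvPolynomial.X 1)

/-- The invariant `𝔢_i` attached to the sequence `a` (indexed from 1). -/
def eInv (a : ℕ → ℕ) (i : ℕ) : ℤ :=
  if Odd i then ((∑ j ∈ Finset.Icc 1 i, a j : ℕ) : ℤ)
  else 2 * (((∑ j ∈ Finset.Icc 1 i, a j : ℕ) / 2 : ℕ) : ℤ)

/-- `C(e,ẽ,ξ;Y,X)`, written in terms of the square root `u = X^{1/2}` (and `Y = yy²`). -/
def Cfun (e et : ℤ) (ξ : ℤ) (u : KK) : KK :=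
  yy ^ et * u ^ (-(e - et) - 2) * (1 - (ξ : KK) * yy ^ (-2 : ℤ) * u ^ (2 : ℤ)) /
    (u ^ (-2 : ℤ) - u ^ (2 : ℤ))

/-- `D(e,ẽ,ξ;Y,X)`, in terms of `u = X^{1/2}`. -/
def Dfun (e et : ℤ) (ξ : ℤ) (u : KK) : KK :=
  yy ^ et * u ^ (-(e - et)) / (1 - (ξ : KK) * u ^ (2 : ℤ))

/-- `C_i`: equals `C` if `i` is even and `D` if `i` is odd. -/
def CD (i : ℕ) (e et : ℤ) (ξ : ℤ) (u : KK) : KK :=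
  if Even i then Cfun e et ξ u else Dfun e et ξ u

/-- The rational function `𝓕(H;Y,X)`, as a function of `u = X^{1/2}` (with `Y = yy²` fixed). -/
def Fcal (a : ℕ → ℕ) (ε : ℕ → ℤ) : ℕ → KK → KK
  | 0, _ => 1
  | 1, u => ∑ i ∈ Finset.range (a 1 + 1), u ^ (2 * (i : ℤ) - (a 1 : ℤ))
  | (m + 2), u =>
      CD (m + 2) (eInv a (m + 2)) (eInv a (m + 1))
          (if Even (m + 2) then ε (m + 2) else ε (m + 1)) u
        * Fcal a ε (m + 1) (yy * u)
      + (if Even (m + 2) then 1 else (ε (m + 2) : KK))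
        * CD (m + 2) (eInv a (m + 2)) (eInv a (m + 1))
            (if Even (m + 2) then ε (m + 2) else ε (m + 1)) u⁻¹
        * Fcal a ε (m + 1) (yy * u⁻¹)

/-- A naive EGK datum of length `n` (entries indexed by `1,…,n`). -/
structure IsNaiveEGK (n : ℕ) (a : ℕ → ℕ) (ε : ℕ → ℤ) : Prop where
  mono : ∀ i, 1 ≤ i → i + 1 ≤ n → a i ≤ a (i + 1)
  mem : ∀ i, 1 ≤ i → i ≤ n → ε i = 0 ∨ ε i = 1 ∨ ε i = -1
  n2 : ∀ i, 1 ≤ i → i ≤ n → Even i → (ε i ≠ 0 ↔ Even (∑ j ∈ Finset.Icc 1 i, a j))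
  n3 : ∀ i, 1 ≤ i → i ≤ n → Odd i → ε i ≠ 0
  n4 : 1 ≤ n → ε 1 = 1
  n5 : ∀ i, 3 ≤ i → i ≤ n → Odd i → Even (∑ j ∈ Finset.Icc 1 (i - 1), a j) →
    ε i = ε (i - 1) ^ (a i + a (i - 1)) * ε (i - 2)
/-- `n_s* = n_1 + ⋯ + n_s`. -/
def nstar (nn : ℕ → ℕ) (s : ℕ) : ℕ := ∑ i ∈ Finset.Icc 1 s, nn i

/-- An EGK datum `(n_1,…,n_r; m_1,…,m_r; ζ_1,…,ζ_r)` of length `n` (indexed from 1). -/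
structure IsEGK (n r : ℕ) (nn mm : ℕ → ℕ) (ζ : ℕ → ℤ) : Prop where
  r_pos : 1 ≤ r
  nn_pos : ∀ s, 1 ≤ s → s ≤ r → 1 ≤ nn s
  total : nstar nn r = n
  m_mono : ∀ s t, 1 ≤ s → s < t → t ≤ r → mm s < mm t
  zeta_mem : ∀ s, 1 ≤ s → s ≤ r → ζ s = 0 ∨ ζ s = 1 ∨ ζ s = -1
  e2 : ∀ s, 1 ≤ s → s ≤ r → Even (nstar nn s) →
    (ζ s ≠ 0 ↔ Even (∑ i ∈ Finset.Icc 1 s, mm i * nn i))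
  e3_ne : ∀ s, 1 ≤ s → s ≤ r → Odd (nstar nn s) → ζ s ≠ 0
  e3a : ∀ s, 1 ≤ s → s ≤ r → Odd (nstar nn s) →
    (∀ i, 1 ≤ i → i < s → Even (nstar nn i)) →
    ζ s = ∏ i ∈ Finset.Icc 1 (s - 1), ζ i ^ (mm (i + 1) + mm i)
  e3b : ∀ s t, 1 ≤ t → t < s → s ≤ r → Odd (nstar nn s) → Odd (nstar nn t) →
    (∀ i, t < i → i < s → Even (nstar nn i)) →
    ζ s = ζ t * ∏ i ∈ Finset.Icc (t + 1) (s - 1), ζ i ^ (mm (i + 1) + mm i)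

/-- `Υ_n(a_1,…,a_n;ε_1,…,ε_n) = (n_1,…,n_r;m_1,…,m_r;ζ_1,…,ζ_r)`:
the sequence `a` consists of `m_1` repeated `n_1` times, …, `m_r` repeated `n_r` times,
with `m_1 < ⋯ < m_r`, and `ζ_s = ε_{n_s*}`. -/
def UpsRel (n : ℕ) (a : ℕ → ℕ) (ε : ℕ → ℤ) (r : ℕ) (nn mm : ℕ → ℕ) (ζ : ℕ → ℤ) : Prop :=
  (∀ s, 1 ≤ s → s ≤ r → 1 ≤ nn s) ∧
  nstar nn r = n ∧
  (∀ s t, 1 ≤ s → s < t → t ≤ r → mm s < mm t) ∧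
  (∀ s j, 1 ≤ s → s ≤ r → nstar nn (s - 1) < j → j ≤ nstar nn s → a j = mm s) ∧
  (∀ s, 1 ≤ s → s ≤ r → ζ s = ε (nstar nn s))

/-! The two data share the sequence `a`, and `ε₁, ε₂` agree at every block end `n_s*`.
Naive-datum conditions then force `ε₁, ε₂` to differ only at isolated positions `k` inside a
block: for even `k` the two signs are `±1` and opposite, while for odd `k` the neighbours
`ε_{k±1}` vanish. Unfolding the recursion for `𝓕` twice around such a position and using the
functional equation `𝓕(H'; Y, X⁻¹) = ±𝓕(H'; Y, X)` one level below, the terms depending on `ε_k`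
are either independent of its sign (even `k`) or cancel between `X` and `X⁻¹` (odd `k`). The
recursion is evaluated only at Laurent monomials `y^i x^e` with `e ≠ 0`, where no denominator
vanishes because `x` and `y` are algebraically independent. -/

lemma xx_ne_zero : xx ≠ 0 :=
  (map_ne_zero_iff _ (IsFractionRing.injective (MvPolynomial (Fin 2) ℚ) KK)).2
    (MvPolynomial.X_ne_zero 0)

lemma yy_ne_zero : yy ≠ 0 :=
  (map_ne_zero_iff _ (IsFractionRing.injective (MvPolynomial (Fin 2) ℚ) KK)).2
    (MvPolynomial.X_ne_zero 1)

lemma eq_of_xx_pow_mul_yy_pow_eq {p q p' q' : ℕ} (h : xx ^ p * yy ^ q = xx ^ p' * yy ^ q') :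
    p = p' := by
  have hpoly : (MvPolynomial.X 0 ^ p * MvPolynomial.X 1 ^ q : MvPolynomial (Fin 2) ℚ) =
      MvPolynomial.X 0 ^ p' * MvPolynomial.X 1 ^ q' :=
    IsFractionRing.injective (MvPolynomial (Fin 2) ℚ) KK (by simpa [xx, yy] using h)
  have h2 := congrArg (MvPolynomial.eval ![(2 : ℚ), 1]) hpoly
  simp only [map_mul, map_pow, MvPolynomial.eval_X] at h2
  simpa using h2

lemma yy_zpow_mul_xx_zpow_ne_one {i e : ℤ} (he : e ≠ 0) : yy ^ i * xx ^ e ≠ 1 := by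
  intro h
  rw [← Int.toNat_sub_toNat_neg i, ← Int.toNat_sub_toNat_neg e, zpow_sub₀ yy_ne_zero,
    zpow_sub₀ xx_ne_zero, div_mul_div_comm, div_eq_one_iff_eq
      (mul_ne_zero (zpow_ne_zero _ yy_ne_zero) (zpow_ne_zero _ xx_ne_zero))] at h
  simp only [zpow_natCast] at h
  have := eq_of_xx_pow_mul_yy_pow_eq (p := e.toNat) (q := i.toNat) (p' := (-e).toNat)
    (q' := (-i).toNat) (by linear_combination h)
  omega

/-- Laurent monomials `y^i x^e` with `e ≠ 0`: the points at which none of the denominators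
met along the recursion for `Fcal` vanishes. -/
def IsXMonomial (u : KK) : Prop := ∃ i e : ℤ, e ≠ 0 ∧ u = yy ^ i * xx ^ e

lemma isXMonomial_xx : IsXMonomial xx := ⟨0, 1, one_ne_zero, by simp⟩

namespace IsXMonomial

variable {u : KK}

lemma ne_zero (hu : IsXMonomial u) : u ≠ 0 := by
  obtain ⟨i, e, -, rfl⟩ := hu
  exact mul_ne_zero (zpow_ne_zero _ yy_ne_zero) (zpow_ne_zero _ xx_ne_zero)

lemma ne_one (hu : IsXMonomial u) : u ≠ 1 := by
  obtain ⟨i, e, he, rfl⟩ := hu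
  exact yy_zpow_mul_xx_zpow_ne_one he

lemma yy_mul (hu : IsXMonomial u) : IsXMonomial (yy * u) := by
  obtain ⟨i, e, he, rfl⟩ := hu
  exact ⟨i + 1, e, he, by rw [zpow_add_one₀ yy_ne_zero]; ring⟩

lemma inv (hu : IsXMonomial u) : IsXMonomial u⁻¹ := by
  obtain ⟨i, e, he, rfl⟩ := hu
  exact ⟨-i, -e, neg_ne_zero.2 he, by rw [mul_inv, zpow_neg, zpow_neg]⟩

lemma pow (hu : IsXMonomial u) {k : ℕ} (hk : k ≠ 0) : IsXMonomial (u ^ k) := by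
  obtain ⟨i, e, he, rfl⟩ := hu
  exact ⟨i * k, e * k, mul_ne_zero he (Int.natCast_ne_zero.2 hk), by
    rw [mul_pow, zpow_mul, zpow_mul, zpow_natCast, zpow_natCast]⟩

lemma ne_neg_one (hu : IsXMonomial u) : u ≠ -1 := fun h ↦
  (hu.pow two_ne_zero).ne_one (by rw [h]; norm_num)

lemma one_sub_mul_sq_ne_zero (hu : IsXMonomial u) {ξ : ℤ} (hξ : ξ = 0 ∨ ξ = 1 ∨ ξ = -1) :
    1 - (ξ : KK) * u ^ 2 ≠ 0 := by
  have h2 := hu.pow two_ne_zero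
  rcases hξ with rfl | rfl | rfl
  · simp
  · exact fun h ↦ h2.ne_one (by linear_combination -h)
  · exact fun h ↦ h2.ne_neg_one (by linear_combination h)

lemma yy_pow_four_mul_sq_sq_sub_one_ne_zero (hu : IsXMonomial u) :
    yy ^ 4 * (u ^ 2) ^ 2 - 1 ≠ 0 := fun h ↦
  (hu.yy_mul.pow four_ne_zero).ne_one (by linear_combination h)

end IsXMonomial

lemma Dfun_mul_Cfun_yy_mul {E Et et ξ : ℤ} {u : KK} (hu : u ≠ 0) (hξ : 1 - (ξ : KK) * u ^ 2 ≠ 0) :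
    Dfun E Et ξ u * Cfun Et et ξ (yy * u) = Dfun E Et 0 u * Cfun Et et 0 (yy * u) := by
  have hy := yy_ne_zero
  simp only [Cfun, Dfun, mul_zpow, zpow_sub₀ hu, zpow_sub₀ hy, zpow_neg, zpow_ofNat,
    Int.cast_zero, zero_mul, sub_zero] at hξ ⊢
  field_simp

lemma Cfun_mul_Dfun_inv_add_eq_zero {E Et et : ℤ} (h : Et - et = E - Et + 2) {u : KK}
    (hu : u ≠ 0) :
    Cfun E Et 0 u * Dfun Et et 0 (yy * u)⁻¹ + Cfun E Et 0 u⁻¹ * Dfun Et et 0 (yy * u⁻¹)⁻¹ = 0 := by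
  obtain rfl : et = Et - (E - Et) - 2 := by omega
  have hy := yy_ne_zero
  simp only [Cfun, Dfun, inv_zpow', mul_zpow, zpow_sub₀ hu, zpow_sub₀ hy, zpow_neg,
    Int.cast_zero, zero_mul, sub_zero, div_one, inv_inv]
  field_simp
  rw [show (u ^ 4 - 1 : KK) = -(1 - u ^ 4) by ring, div_neg, add_neg_cancel, mul_zero]

lemma div_add_div_inv_eq {K : Type*} [Field K] {X V ξ : K} (hξ : ξ = 1 ∨ ξ = -1) (hX : X ≠ 0)
    (h₁ : 1 - ξ * X ≠ 0) (h₂ : 1 - ξ * X⁻¹ ≠ 0) (h₃ : V * X ^ 2 - 1 ≠ 0)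
    (h₄ : V * X⁻¹ ^ 2 - 1 ≠ 0) :
    X * (V * X - ξ) / ((1 - ξ * X) * (V * X ^ 2 - 1)) +
        X⁻¹ * (V * X⁻¹ - ξ) / ((1 - ξ * X⁻¹) * (V * X⁻¹ ^ 2 - 1)) =
      X ^ 2 * (V ^ 2 - 1) / ((V * X ^ 2 - 1) * (V - X ^ 2)) := by
  have h₅ : V - X ^ 2 ≠ 0 := fun h ↦ h₄ (by field_simp; linear_combination h)
  rw [div_add_div _ _ (mul_ne_zero h₁ h₃) (mul_ne_zero h₂ h₄),
    div_eq_div_iff (mul_ne_zero (mul_ne_zero h₁ h₃) (mul_ne_zero h₂ h₄)) (mul_ne_zero h₃ h₅)]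
  field_simp
  rcases hξ with rfl | rfl <;> ring

lemma Dfun_mul_Cfun_inv {E Et et ξ : ℤ} (h : E - Et = Et - et) {u : KK} (hu : u ≠ 0)
    (hξ : 1 - (ξ : KK) * u ^ 2 ≠ 0) :
    Dfun E Et ξ u * Cfun Et et ξ (yy * u)⁻¹ =
      yy ^ (2 * Et) * (u ^ 2 * (yy ^ 4 * u ^ 2 - ξ) /
        ((1 - ξ * u ^ 2) * (yy ^ 4 * (u ^ 2) ^ 2 - 1))) := by
  obtain rfl : et = Et - (E - Et) := by omega
  have hy := yy_ne_zero
  simp only [Cfun, Dfun, inv_zpow', mul_zpow, zpow_sub₀ hu, zpow_sub₀ hy, zpow_neg, zpow_ofNat,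
    two_mul, zpow_add₀ hy]
  field_simp

lemma Dfun_mul_Cfun_inv_add {E Et et ξ : ℤ} (h : E - Et = Et - et) (hξ : ξ = 1 ∨ ξ = -1)
    {u : KK} (hu : IsXMonomial u) :
    Dfun E Et ξ u * Cfun Et et ξ (yy * u)⁻¹ + Dfun E Et ξ u⁻¹ * Cfun Et et ξ (yy * u⁻¹)⁻¹ =
      yy ^ (2 * Et) * ((u ^ 2) ^ 2 * ((yy ^ 4) ^ 2 - 1) /
        ((yy ^ 4 * (u ^ 2) ^ 2 - 1) * (yy ^ 4 - (u ^ 2) ^ 2))) := by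
  have hξ₀ : ξ = 0 ∨ ξ = 1 ∨ ξ = -1 := by omega
  have h₁ := hu.one_sub_mul_sq_ne_zero hξ₀
  have h₂ := hu.inv.one_sub_mul_sq_ne_zero hξ₀
  have h₃ := hu.yy_pow_four_mul_sq_sq_sub_one_ne_zero
  have h₄ := hu.inv.yy_pow_four_mul_sq_sq_sub_one_ne_zero
  rw [Dfun_mul_Cfun_inv h hu.ne_zero h₁, Dfun_mul_Cfun_inv h hu.inv.ne_zero h₂]
  rw [inv_pow] at h₂ h₄ ⊢
  rw [← mul_add, div_add_div_inv_eq (by rcases hξ with rfl | rfl <;> simp)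
    (pow_ne_zero 2 hu.ne_zero) h₁ h₂ h₃ h₄]

section Fcal

variable (a : ℕ → ℕ) (ε : ℕ → ℤ) {m : ℕ}

lemma Fcal_of_even (hm : Even (m + 2)) (u : KK) :
    Fcal a ε (m + 2) u =
      Cfun (eInv a (m + 2)) (eInv a (m + 1)) (ε (m + 2)) u * Fcal a ε (m + 1) (yy * u) +
        Cfun (eInv a (m + 2)) (eInv a (m + 1)) (ε (m + 2)) u⁻¹ * Fcal a ε (m + 1) (yy * u⁻¹) := by
  simp only [Fcal, CD, if_pos hm, one_mul]

lemma Fcal_of_odd (hm : Odd (m + 2)) (u : KK) :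
    Fcal a ε (m + 2) u =
      Dfun (eInv a (m + 2)) (eInv a (m + 1)) (ε (m + 1)) u * Fcal a ε (m + 1) (yy * u) +
        ε (m + 2) * Dfun (eInv a (m + 2)) (eInv a (m + 1)) (ε (m + 1)) u⁻¹ *
          Fcal a ε (m + 1) (yy * u⁻¹) := by
  simp only [Fcal, CD, if_neg (Nat.not_even_iff_odd.2 hm)]

lemma Fcal_inv_of_even {k : ℕ} (hk : Even k) (u : KK) : Fcal a ε k u⁻¹ = Fcal a ε k u := by
  obtain _ | _ | m := k
  · rfl
  · exact absurd hk (by decide)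
  · rw [Fcal_of_even a ε hk, Fcal_of_even a ε hk, inv_inv, add_comm]

lemma Fcal_inv_of_odd {k : ℕ} (hk : Odd k) (h₁ : ε 1 = 1) (hsq : ε k ^ 2 = 1) (u : KK) :
    Fcal a ε k u⁻¹ = ε k * Fcal a ε k u := by
  obtain _ | _ | m := k
  · exact absurd hk (by decide)
  · rw [h₁, Int.cast_one, one_mul, Fcal, Fcal, ← Finset.sum_range_reflect]
    refine Finset.sum_congr rfl fun i hi ↦ ?_
    have := Finset.mem_range.1 hi
    rw [inv_zpow']
    congr 1
    omega
  · have hsq' : (ε (m + 2) : KK) ^ 2 = 1 := by exact_mod_cast hsq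
    rw [Fcal_of_odd a ε hk, Fcal_of_odd a ε hk, inv_inv]
    linear_combination -(Dfun (eInv a (m + 2)) (eInv a (m + 1)) (ε (m + 1)) u⁻¹ *
      Fcal a ε (m + 1) (yy * u⁻¹)) * hsq'

end Fcal

lemma eInv_congr {a a' : ℕ → ℕ} {i : ℕ} (h : ∀ j, 1 ≤ j → j ≤ i → a j = a' j) :
    eInv a i = eInv a' i := by
  have hsum : ∑ j ∈ Finset.Icc 1 i, a j = ∑ j ∈ Finset.Icc 1 i, a' j :=
    Finset.sum_congr rfl fun j hj ↦ h j (Finset.mem_Icc.1 hj).1 (Finset.mem_Icc.1 hj).2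
  rw [eInv, eInv, hsum]

lemma Fcal_congr {a a' : ℕ → ℕ} {ε ε' : ℕ → ℤ} {k : ℕ}
    (ha : ∀ j, 1 ≤ j → j ≤ k → a j = a' j) (hε : ∀ j, 1 ≤ j → j ≤ k → ε j = ε' j) (u : KK) :
    Fcal a ε k u = Fcal a' ε' k u := by
  match k with
  | 0 => rfl
  | 1 => simp only [Fcal, ha 1 le_rfl le_rfl]
  | m + 2 =>
    have ih := Fcal_congr (k := m + 1) (fun j h₁ h₂ ↦ ha j h₁ (by omega))
      (fun j h₁ h₂ ↦ hε j h₁ (by omega))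
    simp only [Fcal, ih, eInv_congr ha, eInv_congr (i := m + 1) fun j h₁ h₂ ↦ ha j h₁ (by omega),
      hε (m + 2) (by omega) le_rfl, hε (m + 1) (by omega) (by omega)]

def partialSum (a : ℕ → ℕ) (k : ℕ) : ℕ := ∑ j ∈ Finset.Icc 1 k, a j

lemma partialSum_succ (a : ℕ → ℕ) (k : ℕ) : partialSum a (k + 1) = partialSum a k + a (k + 1) :=
  Finset.sum_Icc_succ_top (by omega) a

lemma eInv_of_odd (a : ℕ → ℕ) {i : ℕ} (hi : Odd i) : eInv a i = partialSum a i := by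
  rw [eInv, if_pos hi, partialSum]

lemma eInv_of_even (a : ℕ → ℕ) {i : ℕ} (hi : Even i) :
    eInv a i = 2 * (partialSum a i / 2 : ℕ) := by
  rw [eInv, if_neg (Nat.not_odd_iff_even.2 hi), partialSum]

namespace IsNaiveEGK

variable {n : ℕ} {a : ℕ → ℕ} {ε : ℕ → ℤ}

lemma sq_eq_one_of_odd (h : IsNaiveEGK n a ε) {k : ℕ} (hk : k ≤ n) (hodd : Odd k) :
    ε k ^ 2 = 1 := by
  have h₁ : 1 ≤ k := hodd.pos
  have := h.n3 k h₁ hk hodd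
  rcases h.mem k h₁ hk with h₀ | h₀ | h₀ <;> simp_all

lemma eq_zero_of_even (h : IsNaiveEGK n a ε) {k : ℕ} (hk₁ : 1 ≤ k) (hk : k ≤ n) (hev : Even k)
    (hodd : ¬Even (partialSum a k)) : ε k = 0 := by
  by_contra h₀
  exact hodd ((h.n2 k hk₁ hk hev).1 h₀)

lemma n5_add_three (h : IsNaiveEGK n a ε) {j : ℕ} (hj : j + 3 ≤ n) (hodd : Odd (j + 3))
    (hS : Even (partialSum a (j + 2))) :
    ε (j + 3) = ε (j + 2) ^ (a (j + 3) + a (j + 2)) * ε (j + 1) :=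
  h.n5 (j + 3) (by omega) hj hodd hS

lemma congr {a' : ℕ → ℕ} (h : IsNaiveEGK n a ε) (ha : ∀ j, 1 ≤ j → j ≤ n → a j = a' j) :
    IsNaiveEGK n a' ε := by
  have hsum : ∀ i ≤ n, ∑ j ∈ Finset.Icc 1 i, a j = ∑ j ∈ Finset.Icc 1 i, a' j := fun i hi ↦
    Finset.sum_congr rfl fun j hj ↦ ha j (Finset.mem_Icc.1 hj).1 ((Finset.mem_Icc.1 hj).2.trans hi)
  refine ⟨fun i h₁ h₂ ↦ ?_, h.mem, fun i h₁ h₂ hev ↦ ?_, h.n3, h.n4, fun i h₃ hi hodd hev ↦ ?_⟩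
  · rw [← ha i h₁ (by omega), ← ha (i + 1) (by omega) h₂]
    exact h.mono i h₁ h₂
  · rw [← hsum i h₂]
    exact h.n2 i h₁ h₂ hev
  · rw [← hsum (i - 1) (by omega)] at hev
    rw [← ha i (by omega) hi, ← ha (i - 1) (by omega) (by omega)]
    exact h.n5 i h₃ hi hodd hev

end IsNaiveEGK

def AgreeAtBlockEnds (n : ℕ) (a : ℕ → ℕ) (ε ε' : ℕ → ℤ) : Prop :=
  ∀ k, 1 ≤ k → k ≤ n → ε k ≠ ε' k → k + 1 ≤ n ∧ a (k + 1) = a k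

lemma AgreeAtBlockEnds.symm {n : ℕ} {a : ℕ → ℕ} {ε ε' : ℕ → ℤ} (h : AgreeAtBlockEnds n a ε ε') :
    AgreeAtBlockEnds n a ε' ε := fun k hk₁ hk hne ↦ h k hk₁ hk (Ne.symm hne)

section TwoData

variable {n : ℕ} {a : ℕ → ℕ} {ε ε' : ℕ → ℤ}

lemma two_le_of_ne (hN : IsNaiveEGK n a ε) (hN' : IsNaiveEGK n a ε') {k : ℕ} (hk₁ : 1 ≤ k)
    (hk : k ≤ n) (hne : ε k ≠ ε' k) : 2 ≤ k := by
  by_contra! h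
  obtain rfl : k = 1 := by omega
  exact hne ((hN.n4 hk).trans (hN'.n4 hk).symm)

lemma of_ne_of_even (hN : IsNaiveEGK n a ε) (hN' : IsNaiveEGK n a ε') {k : ℕ} (hk₁ : 1 ≤ k)
    (hk : k ≤ n) (hev : Even k) (hne : ε k ≠ ε' k) :
    Even (partialSum a k) ∧ (ε k = 1 ∨ ε k = -1) ∧ ε' k = -ε k := by
  by_cases hS : Even (partialSum a k)
  · have h₀ := (hN.n2 k hk₁ hk hev).2 hS
    have h₀' := (hN'.n2 k hk₁ hk hev).2 hS
    have := hN.mem k hk₁ hk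
    have := hN'.mem k hk₁ hk
    exact ⟨hS, by omega, by omega⟩
  · exact absurd ((hN.eq_zero_of_even hk₁ hk hev hS).trans
      (hN'.eq_zero_of_even hk₁ hk hev hS).symm) hne

lemma pow_eq_one_of_ne (hN : IsNaiveEGK n a ε) (hN' : IsNaiveEGK n a ε')
    (hb : AgreeAtBlockEnds n a ε ε') {k : ℕ} (hk₁ : 1 ≤ k) (hk : k ≤ n) (hev : Even k)
    (hne : ε k ≠ ε' k) : ε k ^ (a (k + 1) + a k) = 1 := by
  obtain ⟨-, hpm, -⟩ := of_ne_of_even hN hN' hk₁ hk hev hne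
  rw [(hb k hk₁ hk hne).2, ← two_mul, pow_mul]
  rcases hpm with h | h <;> simp [h]

lemma not_even_of_ne_of_odd (hN : IsNaiveEGK n a ε) (hN' : IsNaiveEGK n a ε')
    (hb : AgreeAtBlockEnds n a ε ε') {j : ℕ} (hj : Even j) (hjn : j + 1 ≤ n)
    (hne : ε (j + 1) ≠ ε' (j + 1)) : ¬Even (partialSum a j) := by
  induction j using Nat.strong_induction_on with
  | _ j ih =>
  obtain ⟨i, rfl⟩ : ∃ i, j = i + 2 := ⟨j - 2, by
    have := two_le_of_ne hN hN' (by omega) hjn hne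
    grind⟩
  intro hS
  have hodd : Odd (i + 3) := by grind
  have hi : Even i := by grind
  have e₅ := hN.n5_add_three hjn hodd hS
  have e₅' := hN'.n5_add_three hjn hodd hS
  have hne₁ : ε (i + 1) ≠ ε' (i + 1) := by
    by_cases h₂ : ε (i + 2) = ε' (i + 2)
    · intro h₁
      exact hne (by rw [e₅, e₅', h₁, h₂])
    · intro h₁
      obtain ⟨-, -, hneg⟩ := of_ne_of_even hN hN' (by omega) (by omega) hj h₂
      have hpow := pow_eq_one_of_ne hN hN' hb (by omega) (by omega) hj h₂
      have hpow' := pow_eq_one_of_ne hN' hN hb.symm (by omega) (by omega) hj (Ne.symm h₂)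
      exact hne (by rw [e₅, e₅', hpow, hpow', h₁])
  have hS' := ih i (by omega) hi (by omega) hne₁
  have ha : a (i + 2) = a (i + 1) := (hb (i + 1) (by omega) (by omega) hne₁).2
  rw [Nat.even_iff] at hS hS'
  have h₁ := partialSum_succ a i
  have h₂ : partialSum a (i + 2) = partialSum a (i + 1) + a (i + 2) := partialSum_succ a (i + 1)
  omega

lemma eq_of_ne_succ (hN : IsNaiveEGK n a ε) (hN' : IsNaiveEGK n a ε')
    (hb : AgreeAtBlockEnds n a ε ε') {k : ℕ} (hk₁ : 1 ≤ k) (hk : k + 1 ≤ n)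
    (hne : ε (k + 1) ≠ ε' (k + 1)) : ε k = ε' k := by
  by_contra hne₀
  rcases Nat.even_or_odd k with hev | hodd
  · have hS := not_even_of_ne_of_odd hN hN' hb hev hk hne
    exact hS (of_ne_of_even hN hN' hk₁ (by omega) hev hne₀).1
  · obtain ⟨j, rfl⟩ : ∃ j, k = j + 1 := ⟨k - 1, by omega⟩
    have hj : Even j := by grind
    have hS := not_even_of_ne_of_odd hN hN' hb hj (by omega) hne₀
    have ha : a (j + 2) = a (j + 1) := (hb (j + 1) hk₁ (by omega) hne₀).2
    have hev : Even (j + 2) := by grind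
    have hS₂ : Even (partialSum a (j + 2)) := (of_ne_of_even hN hN' (by omega) hk hev hne).1
    rw [Nat.even_iff] at hS hS₂
    have h₁ := partialSum_succ a j
    have h₂ : partialSum a (j + 2) = partialSum a (j + 1) + a (j + 2) := partialSum_succ a (j + 1)
    omega

end TwoData

lemma yy_mul_inv_yy_mul (u : KK) : yy * (yy * u)⁻¹ = u⁻¹ := by
  rw [mul_inv, ← mul_assoc, mul_inv_cancel₀ yy_ne_zero, one_mul]

section TwoSteps

variable (a : ℕ → ℕ) (ε : ℕ → ℤ) {p : ℕ}

lemma Fcal_add_three_of_even (hp : Even p) (u : KK)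
    (hsym : Fcal a ε (p + 1) u⁻¹ = ε (p + 3) * Fcal a ε (p + 1) u) :
    Fcal a ε (p + 3) u =
      Dfun (eInv a (p + 3)) (eInv a (p + 2)) (ε (p + 2)) u *
          Cfun (eInv a (p + 2)) (eInv a (p + 1)) (ε (p + 2)) (yy * u) *
          Fcal a ε (p + 1) (yy * (yy * u)) +
        ε (p + 3) * (Dfun (eInv a (p + 3)) (eInv a (p + 2)) (ε (p + 2)) u⁻¹ *
          Cfun (eInv a (p + 2)) (eInv a (p + 1)) (ε (p + 2)) (yy * u⁻¹) *
          Fcal a ε (p + 1) (yy * (yy * u⁻¹))) +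
        ε (p + 3) * (Dfun (eInv a (p + 3)) (eInv a (p + 2)) (ε (p + 2)) u *
            Cfun (eInv a (p + 2)) (eInv a (p + 1)) (ε (p + 2)) (yy * u)⁻¹ +
          Dfun (eInv a (p + 3)) (eInv a (p + 2)) (ε (p + 2)) u⁻¹ *
            Cfun (eInv a (p + 2)) (eInv a (p + 1)) (ε (p + 2)) (yy * u⁻¹)⁻¹) *
          Fcal a ε (p + 1) u := by
  have h₂ : Even (p + 2) := by grind
  have h₃ : Odd (p + 3) := by grind
  rw [Fcal_of_odd a ε h₃, Fcal_of_even a ε h₂, Fcal_of_even a ε h₂, yy_mul_inv_yy_mul,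
    yy_mul_inv_yy_mul, inv_inv, hsym]
  ring

lemma Fcal_add_three_of_odd (hp : Odd p) (u : KK) :
    Fcal a ε (p + 3) u =
      Cfun (eInv a (p + 3)) (eInv a (p + 2)) (ε (p + 3)) u *
          Dfun (eInv a (p + 2)) (eInv a (p + 1)) (ε (p + 1)) (yy * u) *
          Fcal a ε (p + 1) (yy * (yy * u)) +
        Cfun (eInv a (p + 3)) (eInv a (p + 2)) (ε (p + 3)) u⁻¹ *
          Dfun (eInv a (p + 2)) (eInv a (p + 1)) (ε (p + 1)) (yy * u⁻¹) *
          Fcal a ε (p + 1) (yy * (yy * u⁻¹)) +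
        ε (p + 2) * (Cfun (eInv a (p + 3)) (eInv a (p + 2)) (ε (p + 3)) u *
            Dfun (eInv a (p + 2)) (eInv a (p + 1)) (ε (p + 1)) (yy * u)⁻¹ +
          Cfun (eInv a (p + 3)) (eInv a (p + 2)) (ε (p + 3)) u⁻¹ *
            Dfun (eInv a (p + 2)) (eInv a (p + 1)) (ε (p + 1)) (yy * u⁻¹)⁻¹) *
          Fcal a ε (p + 1) u := by
  have h₁ : Even (p + 1) := by grind
  have h₂ : Odd (p + 2) := by grind
  have h₃ : Even (p + 3) := by grind
  rw [Fcal_of_even a ε h₃, Fcal_of_odd a ε h₂, Fcal_of_odd a ε h₂, yy_mul_inv_yy_mul,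
    yy_mul_inv_yy_mul, inv_inv, Fcal_inv_of_even a ε h₁]
  ring

end TwoSteps

section Gaps

variable (a : ℕ → ℕ) {p : ℕ}

lemma eInv_gap_of_even (hp : Even p) (hS : Even (partialSum a (p + 2)))
    (ha : a (p + 3) = a (p + 2)) :
    eInv a (p + 3) - eInv a (p + 2) = eInv a (p + 2) - eInv a (p + 1) := by
  have : partialSum a (p + 2) = partialSum a (p + 1) + a (p + 2) := partialSum_succ a (p + 1)
  have : partialSum a (p + 3) = partialSum a (p + 2) + a (p + 3) := partialSum_succ a (p + 2)
  rw [eInv_of_odd a (i := p + 3) (by grind), eInv_of_even a (i := p + 2) (by grind),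
    eInv_of_odd a (i := p + 1) (by grind)]
  rw [Nat.even_iff] at hS
  omega

lemma eInv_gap_of_odd (hp : Odd p) (hS : ¬Even (partialSum a (p + 1)))
    (ha : a (p + 3) = a (p + 2)) :
    eInv a (p + 2) - eInv a (p + 1) = eInv a (p + 3) - eInv a (p + 2) + 2 := by
  have : partialSum a (p + 2) = partialSum a (p + 1) + a (p + 2) := partialSum_succ a (p + 1)
  have : partialSum a (p + 3) = partialSum a (p + 2) + a (p + 3) := partialSum_succ a (p + 2)
  rw [eInv_of_even a (i := p + 3) (by grind), eInv_of_odd a (i := p + 2) (by grind),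
    eInv_of_even a (i := p + 1) (by grind)]
  rw [Nat.even_iff] at hS
  omega

end Gaps

section DifferenceCases

variable {n : ℕ} {a : ℕ → ℕ} {ε ε' : ℕ → ℤ}

lemma Fcal_eq_of_ne_of_even (hN : IsNaiveEGK n a ε) (hN' : IsNaiveEGK n a ε')
    (hb : AgreeAtBlockEnds n a ε ε') {p : ℕ} (hp : Even p) (hn : p + 3 ≤ n)
    (hne : ε (p + 2) ≠ ε' (p + 2))
    (hF : ∀ v, IsXMonomial v → Fcal a ε (p + 1) v = Fcal a ε' (p + 1) v)
    {u : KK} (hu : IsXMonomial u) : Fcal a ε (p + 3) u = Fcal a ε' (p + 3) u := by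
  have h₁ : Odd (p + 1) := by grind
  have h₂ : Even (p + 2) := by grind
  have h₃ : Odd (p + 3) := by grind
  obtain ⟨hS, hpm, hneg⟩ := of_ne_of_even hN hN' (by omega) (by omega) h₂ hne
  have hε₁ : ε (p + 1) = ε' (p + 1) := eq_of_ne_succ hN hN' hb (by omega) (by omega) hne
  have hε₃ : ε (p + 3) = ε (p + 1) := by
    rw [hN.n5_add_three hn h₃ hS, pow_eq_one_of_ne hN hN' hb (by omega) (by omega) h₂ hne, one_mul]
  have hε₃' : ε' (p + 3) = ε' (p + 1) := by
    rw [hN'.n5_add_three hn h₃ hS,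
      pow_eq_one_of_ne hN' hN hb.symm (by omega) (by omega) h₂ hne.symm, one_mul]
  have hsym {η : ℕ → ℤ} (hη : IsNaiveEGK n a η) (hη₃ : η (p + 3) = η (p + 1)) :
      Fcal a η (p + 1) u⁻¹ = η (p + 3) * Fcal a η (p + 1) u := by
    rw [Fcal_inv_of_odd a η h₁ (hη.n4 (by omega)) (hη.sq_eq_one_of_odd (by omega) h₁), hη₃]
  have hgap := eInv_gap_of_even a hp hS (hb (p + 2) (by omega) (by omega) hne).2
  have hξ {ξ : ℤ} (h : ξ = 1 ∨ ξ = -1) {v : KK} (hv : IsXMonomial v) :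
      1 - (ξ : KK) * v ^ 2 ≠ 0 := hv.one_sub_mul_sq_ne_zero (by omega)
  rw [Fcal_add_three_of_even a ε hp u (hsym hN hε₃),
    Fcal_add_three_of_even a ε' hp u (hsym hN' hε₃'), ← hF _ hu, ← hF _ hu.yy_mul.yy_mul,
    ← hF _ hu.inv.yy_mul.yy_mul, hε₃, hε₃', ← hε₁, hneg,
    Dfun_mul_Cfun_inv_add hgap hpm hu, Dfun_mul_Cfun_inv_add hgap (by omega) hu,
    Dfun_mul_Cfun_yy_mul hu.ne_zero (hξ hpm hu),
    Dfun_mul_Cfun_yy_mul hu.inv.ne_zero (hξ hpm hu.inv),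
    Dfun_mul_Cfun_yy_mul hu.ne_zero (hξ (ξ := -ε (p + 2)) (by omega) hu),
    Dfun_mul_Cfun_yy_mul hu.inv.ne_zero (hξ (ξ := -ε (p + 2)) (by omega) hu.inv)]

lemma Fcal_eq_of_ne_of_odd (hN : IsNaiveEGK n a ε) (hN' : IsNaiveEGK n a ε')
    (hb : AgreeAtBlockEnds n a ε ε') {p : ℕ} (hp : Odd p) (hn : p + 3 ≤ n)
    (hne : ε (p + 2) ≠ ε' (p + 2))
    (hF : ∀ v, IsXMonomial v → Fcal a ε (p + 1) v = Fcal a ε' (p + 1) v)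
    {u : KK} (hu : IsXMonomial u) : Fcal a ε (p + 3) u = Fcal a ε' (p + 3) u := by
  have h₁ : Even (p + 1) := by grind
  have h₃ : Even (p + 3) := by grind
  have ha : a (p + 3) = a (p + 2) := (hb (p + 2) (by omega) (by omega) hne).2
  have hS₁ : ¬Even (partialSum a (p + 1)) := not_even_of_ne_of_odd hN hN' hb h₁ (by omega) hne
  have hS₃ : ¬Even (partialSum a (p + 3)) := by
    have : partialSum a (p + 2) = partialSum a (p + 1) + a (p + 2) := partialSum_succ a (p + 1)
    have : partialSum a (p + 3) = partialSum a (p + 2) + a (p + 3) := partialSum_succ a (p + 2)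
    rw [Nat.even_iff] at hS₁ ⊢
    omega
  rw [Fcal_add_three_of_odd a ε hp u, Fcal_add_three_of_odd a ε' hp u, ← hF _ hu,
    ← hF _ hu.yy_mul.yy_mul, ← hF _ hu.inv.yy_mul.yy_mul,
    hN.eq_zero_of_even (by omega) (by omega) h₁ hS₁,
    hN'.eq_zero_of_even (by omega) (by omega) h₁ hS₁,
    hN.eq_zero_of_even (by omega) hn h₃ hS₃, hN'.eq_zero_of_even (by omega) hn h₃ hS₃,
    Cfun_mul_Dfun_inv_add_eq_zero (eInv_gap_of_odd a hp hS₁ ha) hu.ne_zero]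
  ring

end DifferenceCases

theorem Fcal_eq_of_agreeAtBlockEnds {n : ℕ} {a : ℕ → ℕ} {ε ε' : ℕ → ℤ}
    (hN : IsNaiveEGK n a ε) (hN' : IsNaiveEGK n a ε') (hb : AgreeAtBlockEnds n a ε ε')
    {k : ℕ} (hk : k ≤ n) (hε : ε k = ε' k) {u : KK} (hu : IsXMonomial u) :
    Fcal a ε k u = Fcal a ε' k u := by
  induction k using Nat.strong_induction_on generalizing u with
  | _ k ih =>
  obtain _ | _ | m := k
  · rfl
  · rfl
  by_cases hm : ε (m + 1) = ε' (m + 1)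
  · simp only [Fcal, ih (m + 1) (by omega) (by omega) hm hu.yy_mul,
      ih (m + 1) (by omega) (by omega) hm hu.inv.yy_mul, hm, hε]
  obtain ⟨p, rfl⟩ : ∃ p, m = p + 1 :=
    ⟨m - 1, by have := two_le_of_ne hN hN' (by omega) (by omega) hm; omega⟩
  have hF : ∀ v, IsXMonomial v → Fcal a ε (p + 1) v = Fcal a ε' (p + 1) v := fun v hv ↦
    ih (p + 1) (by omega) (by omega) (eq_of_ne_succ hN hN' hb (by omega) (by omega) hm) hv
  rcases Nat.even_or_odd p with hp | hp
  · exact Fcal_eq_of_ne_of_even hN hN' hb hp hk hm hF hu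
  · exact Fcal_eq_of_ne_of_odd hN hN' hb hp hk hm hF hu

namespace UpsRel

variable {n r : ℕ} {nn mm : ℕ → ℕ} {ζ : ℕ → ℤ} {a a' : ℕ → ℕ} {ε ε' : ℕ → ℤ}

lemma exists_block (h : UpsRel n a ε r nn mm ζ) {j : ℕ} (hj₁ : 1 ≤ j) (hj : j ≤ n) :
    ∃ s, 1 ≤ s ∧ s ≤ r ∧ nstar nn (s - 1) < j ∧ j ≤ nstar nn s := by
  have hex : ∃ s, j ≤ nstar nn s := ⟨r, h.2.1 ▸ hj⟩
  have hmin := Nat.find_min hex (m := Nat.find hex - 1)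
  have h₀ : Nat.find hex ≠ 0 := fun h₀ ↦ by
    have := Nat.find_spec hex
    rw [h₀, nstar, Finset.Icc_eq_empty (by omega), Finset.sum_empty] at this
    omega
  exact ⟨Nat.find hex, by omega, Nat.find_min' hex (h.2.1 ▸ hj), by
    have := hmin (by omega); omega, Nat.find_spec hex⟩

lemma apply_eq (h : UpsRel n a ε r nn mm ζ) (h' : UpsRel n a' ε' r nn mm ζ) {j : ℕ}
    (hj₁ : 1 ≤ j) (hj : j ≤ n) : a j = a' j := by
  obtain ⟨s, hs₁, hs, hlt, hle⟩ := h.exists_block hj₁ hj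
  rw [h.2.2.2.1 s j hs₁ hs hlt hle, h'.2.2.2.1 s j hs₁ hs hlt hle]

lemma agreeAtBlockEnds (h : UpsRel n a ε r nn mm ζ) (h' : UpsRel n a' ε' r nn mm ζ) :
    AgreeAtBlockEnds n a ε ε' := by
  intro k hk₁ hk hne
  obtain ⟨s, hs₁, hs, hlt, hle⟩ := h.exists_block hk₁ hk
  have hk_lt : k < nstar nn s := lt_of_le_of_ne hle fun hks ↦
    hne (by rw [hks, ← h.2.2.2.2 s hs₁ hs, ← h'.2.2.2.2 s hs₁ hs])
  have hsn : nstar nn s ≤ n :=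
    h.2.1 ▸ Finset.sum_le_sum_of_subset (Finset.Icc_subset_Icc le_rfl hs)
  exact ⟨by omega, by rw [h.2.2.2.1 s (k + 1) hs₁ hs (by omega) (by omega),
    h.2.2.2.1 s k hs₁ hs hlt hle]⟩

end UpsRel

theorem statement_7 (n : ℕ) (hn : 1 ≤ n) (a₁ a₂ : ℕ → ℕ) (ε₁ ε₂ : ℕ → ℤ)
    (h₁ : IsNaiveEGK n a₁ ε₁) (h₂ : IsNaiveEGK n a₂ ε₂)
    (hUps : ∃ (r : ℕ) (nn mm : ℕ → ℕ) (ζ : ℕ → ℤ),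
      UpsRel n a₁ ε₁ r nn mm ζ ∧ UpsRel n a₂ ε₂ r nn mm ζ) :
    Fcal a₁ ε₁ n xx = Fcal a₂ ε₂ n xx := by
  obtain ⟨r, nn, mm, ζ, hU₁, hU₂⟩ := hUps
  have ha : ∀ j, 1 ≤ j → j ≤ n → a₁ j = a₂ j := fun j ↦ hU₁.apply_eq hU₂
  have hb := hU₁.agreeAtBlockEnds hU₂
  have hεn : ε₁ n = ε₂ n := by
    by_contra hne
    have := (hb n hn le_rfl hne).1
    omega
  calc Fcal a₁ ε₁ n xx = Fcal a₁ ε₂ n xx :=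
        Fcal_eq_of_agreeAtBlockEnds h₁ (h₂.congr fun j h h' ↦ (ha j h h').symm) hb le_rfl hεn
          isXMonomial_xx
    _ = Fcal a₂ ε₂ n xx := Fcal_congr ha (fun _ _ _ ↦ rfl) xx

end
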